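/- Let 𝔸_V=(A,V,ψ,σ) be a quadruple satisfying the twisted condition, the cocycle condition, and ∇_{A⊗V}∘σ=σ, and let A×V, p_{A⊗V}, i_{A⊗V} be the image, projection and injection of a splitting of the idempotent ∇_{A⊗V}. Then the product μ_{A×V}=p_{A⊗V}∘μ_{A⊗V}∘(i_{A⊗V}⊗i_{A⊗V}) on A×V is associative. -/

import Mathlib

/-!
Associativity of `μ_A` makes left `A`-linear extension `g ↦ (μ_A ⊗ Y) ∘ (A ⊗ g)` (`tmap`)
compatible with composition, and `μ_{A⊗V}` is the `A`-linear extension of left multiplication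
`v · x` by `η_A ⊗ v` (`vMul`). So associativity of `μ_{A⊗V}` reduces to `(v · x) y = v · (x y)`.
The measuring condition moves `v` past a product in `A`; with it, the twisted and cocycle
conditions give `σ(u, v) x = u · (v · x)`, and this yields the reduced identity. Finally
`∇ ∘ σ = σ` makes `∇ ∘ μ_{A⊗V} = μ_{A⊗V}`, so the associative product `μ_{A⊗V}` restricts to
the image of `∇`.
-/

open CategoryTheory MonoidalCategory

universe v u

namespace WeakCrossed

variable {C : Type u} [Category.{v} C] [MonoidalCategory C]

/-- The monoid axioms for a triple `(A, η, μ)` in a monoidal category. -/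
def IsMon (A : C) (eta : 𝟙_ C ⟶ A) (mu : A ⊗ A ⟶ A) : Prop :=
  (eta ▷ A) ≫ mu = (λ_ A).hom ∧ (A ◁ eta) ≫ mu = (ρ_ A).hom ∧
    (mu ▷ A) ≫ mu = (α_ A A A).hom ≫ (A ◁ mu) ≫ mu

/-- The morphism `(μ_A ⊗ Y) ∘ (A ⊗ f) : (A ⊗ X) ⊗ Z ⟶ A ⊗ Y` for `f : X ⊗ Z ⟶ A ⊗ Y`. -/
def phi (A : C) {X Z Y : C} (mu : A ⊗ A ⟶ A) (f : X ⊗ Z ⟶ A ⊗ Y) :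
    (A ⊗ X) ⊗ Z ⟶ A ⊗ Y :=
  (α_ A X Z).hom ≫ (A ◁ f) ≫ (α_ A A Y).inv ≫ (mu ▷ Y)

/-- The measuring condition `(μ_A ⊗ V) ∘ (A ⊗ ψ) ∘ (ψ ⊗ A) = ψ ∘ (V ⊗ μ_A)`. -/
def Measuring (A V : C) (mu : A ⊗ A ⟶ A) (psi : V ⊗ A ⟶ A ⊗ V) : Prop :=
  (psi ▷ A) ≫ phi A mu psi = (α_ V A A).hom ≫ (V ◁ mu) ≫ psi

/-- The idempotent `∇_{A⊗V} = (μ_A ⊗ V) ∘ (A ⊗ ψ) ∘ (A ⊗ V ⊗ η_A)`. -/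
def nabla (A V : C) (eta : 𝟙_ C ⟶ A) (mu : A ⊗ A ⟶ A) (psi : V ⊗ A ⟶ A ⊗ V) :
    A ⊗ V ⟶ A ⊗ V :=
  (ρ_ (A ⊗ V)).inv ≫ ((A ⊗ V) ◁ eta) ≫ phi A mu psi

/-- The twisted condition
`(μ_A ⊗ V) ∘ (A ⊗ ψ) ∘ (σ ⊗ A) = (μ_A ⊗ V) ∘ (A ⊗ σ) ∘ (ψ ⊗ V) ∘ (V ⊗ ψ)`. -/
def Twisted (A V : C) (mu : A ⊗ A ⟶ A) (psi : V ⊗ A ⟶ A ⊗ V)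
    (sig : V ⊗ V ⟶ A ⊗ V) : Prop :=
  (sig ▷ A) ≫ phi A mu psi =
    (α_ V V A).hom ≫ (V ◁ psi) ≫ (α_ V A V).inv ≫ (psi ▷ V) ≫ phi A mu sig

/-- The cocycle condition
`(μ_A ⊗ V) ∘ (A ⊗ σ) ∘ (σ ⊗ V) = (μ_A ⊗ V) ∘ (A ⊗ σ) ∘ (ψ ⊗ V) ∘ (V ⊗ σ)`. -/
def Cocycle (A V : C) (mu : A ⊗ A ⟶ A) (psi : V ⊗ A ⟶ A ⊗ V)
    (sig : V ⊗ V ⟶ A ⊗ V) : Prop :=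
  (sig ▷ V) ≫ phi A mu sig =
    (α_ V V V).hom ≫ (V ◁ sig) ≫ (α_ V A V).inv ≫ (psi ▷ V) ≫ phi A mu sig

/-- The weak crossed product multiplication
`μ_{A⊗V} = (μ_A ⊗ V) ∘ (μ_A ⊗ σ) ∘ (A ⊗ ψ ⊗ V)`. -/
def prodAV (A V : C) (mu : A ⊗ A ⟶ A) (psi : V ⊗ A ⟶ A ⊗ V)
    (sig : V ⊗ V ⟶ A ⊗ V) : (A ⊗ V) ⊗ (A ⊗ V) ⟶ A ⊗ V :=
  (α_ A V (A ⊗ V)).hom ≫ (A ◁ ((α_ V A V).inv ≫ (psi ▷ V) ≫ (α_ A V V).hom)) ≫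
    (α_ A A (V ⊗ V)).inv ≫ (mu ⊗ₘ sig) ≫ (α_ A A V).inv ≫ (mu ▷ V)

/-- The morphism `η_A ⊗ V : V ⟶ A ⊗ V`. -/
def etaT (A V : C) (eta : 𝟙_ C ⟶ A) : V ⟶ A ⊗ V := (λ_ V).inv ≫ (eta ▷ V)

/-- The morphism `β_ν = (μ_A ⊗ V) ∘ (A ⊗ ν) : A ⟶ A ⊗ V`. -/
def beta (A V : C) (mu : A ⊗ A ⟶ A) (nu : 𝟙_ C ⟶ A ⊗ V) : A ⟶ A ⊗ V :=
  (ρ_ A).inv ≫ (A ◁ nu) ≫ (α_ A A V).inv ≫ (mu ▷ V)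

/-- Preunit condition (pre1):
`(μ_A ⊗ V) ∘ (A ⊗ σ) ∘ (ψ ⊗ V) ∘ (V ⊗ ν) = ∇_{A⊗V} ∘ (η_A ⊗ V)`. -/
def Pre1 (A V : C) (eta : 𝟙_ C ⟶ A) (mu : A ⊗ A ⟶ A) (psi : V ⊗ A ⟶ A ⊗ V)
    (sig : V ⊗ V ⟶ A ⊗ V) (nu : 𝟙_ C ⟶ A ⊗ V) : Prop :=
  (ρ_ V).inv ≫ (V ◁ nu) ≫ (α_ V A V).inv ≫ (psi ▷ V) ≫ phi A mu sig =
    etaT A V eta ≫ nabla A V eta mu psi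

/-- Preunit condition (pre2):
`(μ_A ⊗ V) ∘ (A ⊗ σ) ∘ (ν ⊗ V) = ∇_{A⊗V} ∘ (η_A ⊗ V)`. -/
def Pre2 (A V : C) (eta : 𝟙_ C ⟶ A) (mu : A ⊗ A ⟶ A) (psi : V ⊗ A ⟶ A ⊗ V)
    (sig : V ⊗ V ⟶ A ⊗ V) (nu : 𝟙_ C ⟶ A ⊗ V) : Prop :=
  (λ_ V).inv ≫ (nu ▷ V) ≫ phi A mu sig = etaT A V eta ≫ nabla A V eta mu psi

/-- Preunit condition (pre3): `(μ_A ⊗ V) ∘ (A ⊗ ψ) ∘ (ν ⊗ A) = β_ν`. -/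
def Pre3 (A V : C) (mu : A ⊗ A ⟶ A) (psi : V ⊗ A ⟶ A ⊗ V)
    (nu : 𝟙_ C ⟶ A ⊗ V) : Prop :=
  (λ_ A).inv ≫ (nu ▷ A) ≫ phi A mu psi = beta A V mu nu

/-- `(A ⊗ V, μ_{A⊗V})` is a weak crossed product: measuring, twisted and cocycle
conditions hold and `∇_{A⊗V} ∘ σ = σ`. -/
def WCP (A V : C) (eta : 𝟙_ C ⟶ A) (mu : A ⊗ A ⟶ A) (psi : V ⊗ A ⟶ A ⊗ V)
    (sig : V ⊗ V ⟶ A ⊗ V) : Prop :=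
  Measuring A V mu psi ∧ Twisted A V mu psi sig ∧ Cocycle A V mu psi sig ∧
    sig ≫ nabla A V eta mu psi = sig

/-- `(A ⊗ V, μ_{A⊗V})` is a weak crossed product with preunit `ν`. -/
def WCPpre (A V : C) (eta : 𝟙_ C ⟶ A) (mu : A ⊗ A ⟶ A) (psi : V ⊗ A ⟶ A ⊗ V)
    (sig : V ⊗ V ⟶ A ⊗ V) (nu : 𝟙_ C ⟶ A ⊗ V) : Prop :=
  WCP A V eta mu psi sig ∧ Pre1 A V eta mu psi sig nu ∧
    Pre2 A V eta mu psi sig nu ∧ Pre3 A V mu psi nu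

/-- `(μ_A ⊗ Y) ∘ (A ⊗ γ) : A ⊗ X ⟶ A ⊗ Y` for `γ : X ⟶ A ⊗ Y`. -/
def tmap (A : C) {X Y : C} (mu : A ⊗ A ⟶ A) (g : X ⟶ A ⊗ Y) : A ⊗ X ⟶ A ⊗ Y :=
  (A ◁ g) ≫ (α_ A A Y).inv ≫ (mu ▷ Y)

/-- Left `A`-linearity of `T : A ⊗ X ⟶ A ⊗ Y`:
`T ∘ (μ_A ⊗ X) = (μ_A ⊗ Y) ∘ (A ⊗ T)`. -/
def LeftLin (A : C) {X Y : C} (mu : A ⊗ A ⟶ A) (T : A ⊗ X ⟶ A ⊗ Y) : Prop :=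
  (mu ▷ X) ≫ T = (α_ A A X).hom ≫ (A ◁ T) ≫ (α_ A A Y).inv ≫ (mu ▷ Y)

/-- `ν` is a preunit for the associative product `m` on `X`. -/
def IsPreunit {X : C} (m : X ⊗ X ⟶ X) (nu : 𝟙_ C ⟶ X) : Prop :=
  (ρ_ X).inv ≫ (X ◁ nu) ≫ m = (λ_ X).inv ≫ (nu ▷ X) ≫ m ∧
  (ρ_ X).inv ≫ (X ◁ nu) ≫ m =
    (ρ_ X).inv ≫ (X ◁ ((λ_ (𝟙_ C)).inv ≫ (nu ⊗ₘ nu) ≫ m)) ≫ m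

/-- Brzeziński normalization conditions: `ψ ∘ (η_V ⊗ A) = A ⊗ η_V`,
`ψ ∘ (V ⊗ η_A) = η_A ⊗ V`, `σ ∘ (η_V ⊗ V) = σ ∘ (V ⊗ η_V) = η_A ⊗ V`. -/
def BrzNorm (A V : C) (eta : 𝟙_ C ⟶ A) (etaV : 𝟙_ C ⟶ V) (psi : V ⊗ A ⟶ A ⊗ V)
    (sig : V ⊗ V ⟶ A ⊗ V) : Prop :=
  (λ_ A).inv ≫ (etaV ▷ A) ≫ psi = (ρ_ A).inv ≫ (A ◁ etaV) ∧
  (ρ_ V).inv ≫ (V ◁ eta) ≫ psi = (λ_ V).inv ≫ (eta ▷ V) ∧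
  (λ_ V).inv ≫ (etaV ▷ V) ≫ sig = (λ_ V).inv ≫ (eta ▷ V) ∧
  (ρ_ V).inv ≫ (V ◁ etaV) ≫ sig = (λ_ V).inv ≫ (eta ▷ V)

section LinearExtension

variable {A : C} {mu : A ⊗ A ⟶ A}

lemma phi_eq_tmap {X Z Y : C} (f : X ⊗ Z ⟶ A ⊗ Y) :
    phi A mu f = (α_ A X Z).hom ≫ tmap A mu f := by
  simp [phi, tmap]

lemma whiskerLeft_comp_tmap {X' X Y : C} (f : X' ⟶ X) (g : X ⟶ A ⊗ Y) :
    (A ◁ f) ≫ tmap A mu g = tmap A mu (f ≫ g) := by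
  simp [tmap]

lemma tmap_comp_tmap (hmu : (mu ▷ A) ≫ mu = (α_ A A A).hom ≫ (A ◁ mu) ≫ mu)
    {X Y Z : C} (g : X ⟶ A ⊗ Y) (h : Y ⟶ A ⊗ Z) :
    tmap A mu g ≫ tmap A mu h = tmap A mu (g ≫ tmap A mu h) := by
  simp only [tmap, MonoidalCategory.whiskerLeft_comp, Category.assoc]
  rw [← whisker_exchange_assoc, associator_inv_naturality_left_assoc,
    ← comp_whiskerRight, hmu]
  simp only [comp_whiskerRight]
  monoidal

lemma tmap_whiskerRight_comp_tmap
    (hmu : (mu ▷ A) ≫ mu = (α_ A A A).hom ≫ (A ◁ mu) ≫ mu)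
    {X Y Z W : C} (g : X ⟶ A ⊗ Y) (h : Y ⊗ Z ⟶ A ⊗ W) :
    (tmap A mu g ▷ Z) ≫ (α_ A Y Z).hom ≫ tmap A mu h =
      (α_ A X Z).hom ≫ tmap A mu ((g ▷ Z) ≫ (α_ A Y Z).hom ≫ tmap A mu h) := by
  have hwhisker : (tmap A mu g ▷ Z) ≫ (α_ A Y Z).hom =
      (α_ A X Z).hom ≫ tmap A mu ((g ▷ Z) ≫ (α_ A Y Z).hom) := by
    simp only [tmap, comp_whiskerRight, Category.assoc, MonoidalCategory.whiskerLeft_comp]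
    monoidal
  rw [reassoc_of% hwhisker, tmap_comp_tmap hmu, Category.assoc]

lemma phi_whiskerRight_comp_phi (hmu : (mu ▷ A) ≫ mu = (α_ A A A).hom ≫ (A ◁ mu) ≫ mu)
    {X Y Z U W : C} (f : X ⊗ Z ⟶ A ⊗ Y) (g : Y ⊗ U ⟶ A ⊗ W) :
    (phi A mu f ▷ U) ≫ phi A mu g =
      ((α_ A X Z).hom ▷ U) ≫ (α_ A (X ⊗ Z) U).hom ≫ tmap A mu ((f ▷ U) ≫ phi A mu g) := by
  rw [phi_eq_tmap f, phi_eq_tmap g, comp_whiskerRight, Category.assoc,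
    tmap_whiskerRight_comp_tmap hmu, ← phi_eq_tmap]

end LinearExtension

section CrossedProduct

variable {A V : C} {eta : 𝟙_ C ⟶ A} {mu : A ⊗ A ⟶ A}
  {psi : V ⊗ A ⟶ A ⊗ V} {sig : V ⊗ V ⟶ A ⊗ V}

def vMul (mu : A ⊗ A ⟶ A) (psi : V ⊗ A ⟶ A ⊗ V) (sig : V ⊗ V ⟶ A ⊗ V) :
    V ⊗ (A ⊗ V) ⟶ A ⊗ V :=
  (α_ V A V).inv ≫ (psi ▷ V) ≫ phi A mu sig

lemma prodAV_eq_tmap (hmu : (mu ▷ A) ≫ mu = (α_ A A A).hom ≫ (A ◁ mu) ≫ mu) :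
    prodAV A V mu psi sig = (α_ A V (A ⊗ V)).hom ≫ tmap A mu (vMul mu psi sig) := by
  have hfactor : prodAV A V mu psi sig = (α_ A V (A ⊗ V)).hom ≫
      tmap A mu ((α_ V A V).inv ≫ (psi ▷ V) ≫ (α_ A V V).hom) ≫ tmap A mu sig := by
    simp only [prodAV, tmap, MonoidalCategory.tensorHom_def]
    monoidal
  rw [hfactor, tmap_comp_tmap hmu, vMul, phi_eq_tmap]
  simp only [Category.assoc]

lemma prodAV_eq_phi (hmu : (mu ▷ A) ≫ mu = (α_ A A A).hom ≫ (A ◁ mu) ≫ mu) :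
    prodAV A V mu psi sig = phi A mu (vMul mu psi sig) := by
  rw [prodAV_eq_tmap hmu, phi_eq_tmap]

lemma prodAV_eq_phi_whiskerRight_comp_phi
    (hmu : (mu ▷ A) ≫ mu = (α_ A A A).hom ≫ (A ◁ mu) ≫ mu) :
    prodAV A V mu psi sig =
      (α_ (A ⊗ V) A V).inv ≫ (phi A mu psi ▷ V) ≫ phi A mu sig := by
  rw [phi_whiskerRight_comp_phi hmu, prodAV_eq_tmap hmu, vMul, ← whiskerLeft_comp_tmap]
  monoidal

lemma whiskerLeft_tmap_comp_vMul (hmu : (mu ▷ A) ≫ mu = (α_ A A A).hom ≫ (A ◁ mu) ≫ mu)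
    (hpsi : Measuring A V mu psi) {X : C} (g : X ⟶ A ⊗ V) :
    (V ◁ tmap A mu g) ≫ vMul mu psi sig =
      (α_ V A X).inv ≫ (psi ▷ X) ≫ (α_ A V X).hom ≫
        tmap A mu ((V ◁ g) ≫ vMul mu psi sig) := by
  have hmeas : (V ◁ mu) ≫ psi = (α_ V A A).inv ≫ (psi ▷ A) ≫ phi A mu psi := by
    rw [hpsi, Iso.inv_hom_id_assoc]
  have hvMul : (psi ▷ V) ≫ phi A mu sig = (α_ V A V).hom ≫ vMul mu psi sig := by
    rw [vMul, Iso.hom_inv_id_assoc]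
  have hpull : (V ◁ (mu ▷ V)) ≫ (α_ V A V).inv ≫ (psi ▷ V) =
      (α_ V (A ⊗ A) V).inv ≫ (((V ◁ mu) ≫ psi) ▷ V) := by
    simp only [comp_whiskerRight]
    monoidal
  rw [← whiskerLeft_comp_tmap, ← associator_naturality_right_assoc, ← whisker_exchange_assoc,
    ← associator_inv_naturality_right_assoc]
  conv_lhs => rw [tmap, vMul]
  simp only [MonoidalCategory.whiskerLeft_comp, Category.assoc]
  rw [reassoc_of% hpull, hmeas]
  simp only [comp_whiskerRight, Category.assoc]
  rw [phi_whiskerRight_comp_phi hmu, hvMul, ← whiskerLeft_comp_tmap]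
  monoidal

lemma sig_whiskerRight_comp_prodAV
    (hmu : (mu ▷ A) ≫ mu = (α_ A A A).hom ≫ (A ◁ mu) ≫ mu) (hpsi : Measuring A V mu psi)
    (htw : Twisted A V mu psi sig) (hco : Cocycle A V mu psi sig) :
    (sig ▷ (A ⊗ V)) ≫ prodAV A V mu psi sig =
      (α_ V V (A ⊗ V)).hom ≫ (V ◁ vMul mu psi sig) ≫ vMul mu psi sig := by
  have htw' : (sig ▷ A) ≫ phi A mu psi = (α_ V V A).hom ≫ (V ◁ psi) ≫ vMul mu psi sig := by
    rw [htw, vMul]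
  have hco' : (sig ▷ V) ≫ phi A mu sig = (α_ V V V).hom ≫ (V ◁ sig) ≫ vMul mu psi sig := by
    rw [hco, vMul]
  have hvMul : vMul mu psi sig =
      (α_ V A V).inv ≫ (psi ▷ V) ≫ (α_ A V V).hom ≫ tmap A mu sig := by
    rw [vMul, phi_eq_tmap]
  rw [prodAV_eq_phi_whiskerRight_comp_phi hmu, associator_inv_naturality_left_assoc,
    ← comp_whiskerRight_assoc, htw']
  conv_lhs => rw [vMul]
  simp only [comp_whiskerRight, Category.assoc]
  rw [phi_whiskerRight_comp_phi hmu, hco']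
  conv_rhs => arg 2; arg 1; rw [hvMul]
  simp only [MonoidalCategory.whiskerLeft_comp, Category.assoc]
  rw [whiskerLeft_tmap_comp_vMul hmu hpsi, ← whiskerLeft_comp_tmap (α_ V V V).hom]
  monoidal

lemma vMul_whiskerRight_comp_prodAV
    (hmu : (mu ▷ A) ≫ mu = (α_ A A A).hom ≫ (A ◁ mu) ≫ mu) (hpsi : Measuring A V mu psi)
    (htw : Twisted A V mu psi sig) (hco : Cocycle A V mu psi sig) :
    (vMul mu psi sig ▷ (A ⊗ V)) ≫ prodAV A V mu psi sig =
      (α_ V (A ⊗ V) (A ⊗ V)).hom ≫ (V ◁ prodAV A V mu psi sig) ≫ vMul mu psi sig := by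
  conv_lhs => rw [vMul, prodAV_eq_phi hmu]
  simp only [comp_whiskerRight, Category.assoc]
  rw [phi_whiskerRight_comp_phi hmu, ← prodAV_eq_phi hmu,
    sig_whiskerRight_comp_prodAV hmu hpsi htw hco]
  conv_rhs => arg 2; arg 1; rw [prodAV_eq_tmap hmu]
  simp only [MonoidalCategory.whiskerLeft_comp, Category.assoc]
  rw [whiskerLeft_tmap_comp_vMul hmu hpsi, ← whiskerLeft_comp_tmap (α_ V V (A ⊗ V)).hom]
  monoidal

lemma prodAV_assoc
    (hmu : (mu ▷ A) ≫ mu = (α_ A A A).hom ≫ (A ◁ mu) ≫ mu) (hpsi : Measuring A V mu psi)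
    (htw : Twisted A V mu psi sig) (hco : Cocycle A V mu psi sig) :
    (prodAV A V mu psi sig ▷ (A ⊗ V)) ≫ prodAV A V mu psi sig =
      (α_ (A ⊗ V) (A ⊗ V) (A ⊗ V)).hom ≫ ((A ⊗ V) ◁ prodAV A V mu psi sig) ≫
        prodAV A V mu psi sig := by
  conv_lhs => rw [prodAV_eq_tmap hmu, comp_whiskerRight, Category.assoc,
    tmap_whiskerRight_comp_tmap hmu, ← prodAV_eq_tmap hmu,
    vMul_whiskerRight_comp_prodAV hmu hpsi htw hco]
  rw [← whiskerLeft_comp_tmap (α_ V (A ⊗ V) (A ⊗ V)).hom, ← whiskerLeft_comp_tmap]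
  conv_rhs => arg 2; arg 2; rw [prodAV_eq_tmap hmu]
  monoidal

lemma tmap_comp_nabla (hmu : (mu ▷ A) ≫ mu = (α_ A A A).hom ≫ (A ◁ mu) ≫ mu)
    {X : C} (g : X ⟶ A ⊗ V) (hg : g ≫ nabla A V eta mu psi = g) :
    tmap A mu g ≫ nabla A V eta mu psi = tmap A mu g := by
  have hnabla : nabla A V eta mu psi = tmap A mu ((ρ_ V).inv ≫ (V ◁ eta) ≫ psi) := by
    simp only [nabla, phi, tmap, MonoidalCategory.whiskerLeft_comp, Category.assoc]
    monoidal
  rw [hnabla, tmap_comp_tmap hmu, ← hnabla, hg]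

lemma prodAV_comp_nabla (hmu : (mu ▷ A) ≫ mu = (α_ A A A).hom ≫ (A ◁ mu) ≫ mu)
    (hsig : sig ≫ nabla A V eta mu psi = sig) :
    prodAV A V mu psi sig ≫ nabla A V eta mu psi = prodAV A V mu psi sig := by
  have hvMul : vMul mu psi sig ≫ nabla A V eta mu psi = vMul mu psi sig := by
    simp only [vMul, phi_eq_tmap, Category.assoc, tmap_comp_nabla hmu sig hsig]
  rw [prodAV_eq_tmap hmu, Category.assoc, tmap_comp_nabla hmu _ hvMul]

end CrossedProduct

def restrictProduct {X P : C} (m : X ⊗ X ⟶ X) (p : X ⟶ P) (i : P ⟶ X) : P ⊗ P ⟶ P :=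
  (i ⊗ₘ i) ≫ m ≫ p

lemma restrictProduct_assoc {X P : C} (m : X ⊗ X ⟶ X)
    (hm : (m ▷ X) ≫ m = (α_ X X X).hom ≫ (X ◁ m) ≫ m)
    (p : X ⟶ P) (i : P ⟶ X) (hmpi : m ≫ p ≫ i = m) :
    (restrictProduct m p i ▷ P) ≫ restrictProduct m p i =
      (α_ P P P).hom ≫ (P ◁ restrictProduct m p i) ≫ restrictProduct m p i := by
  have hleft : (restrictProduct m p i ▷ P) ≫ (i ⊗ₘ i) = ((i ⊗ₘ i) ⊗ₘ i) ≫ (m ▷ X) := by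
    simp only [restrictProduct, ← tensorHom_id, tensorHom_comp_tensorHom, Category.id_comp,
      Category.comp_id, Category.assoc, hmpi]
  have hright : (P ◁ restrictProduct m p i) ≫ (i ⊗ₘ i) = (i ⊗ₘ (i ⊗ₘ i)) ≫ (X ◁ m) := by
    simp only [restrictProduct, ← id_tensorHom, tensorHom_comp_tensorHom, Category.id_comp,
      Category.comp_id, Category.assoc, hmpi]
  unfold restrictProduct at hleft hright ⊢
  rw [reassoc_of% hleft, reassoc_of% hright, reassoc_of% hm, associator_naturality_assoc]

theorem restricted_product_assoc_general (A V : C) (eta : 𝟙_ C ⟶ A) (mu : A ⊗ A ⟶ A)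
    (hA : IsMon A eta mu) (psi : V ⊗ A ⟶ A ⊗ V) (hpsi : Measuring A V mu psi)
    (sig : V ⊗ V ⟶ A ⊗ V) (htw : Twisted A V mu psi sig)
    (hco : Cocycle A V mu psi sig) (hsig : sig ≫ nabla A V eta mu psi = sig)
    (P : C) (p : A ⊗ V ⟶ P) (i : P ⟶ A ⊗ V)
    (hpi : p ≫ i = nabla A V eta mu psi) :
    (((i ⊗ₘ i) ≫ prodAV A V mu psi sig ≫ p) ▷ P) ≫
        ((i ⊗ₘ i) ≫ prodAV A V mu psi sig ≫ p) =
      (α_ P P P).hom ≫ (P ◁ ((i ⊗ₘ i) ≫ prodAV A V mu psi sig ≫ p)) ≫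
        ((i ⊗ₘ i) ≫ prodAV A V mu psi sig ≫ p) :=
  restrictProduct_assoc _ (prodAV_assoc hA.2.2 hpsi htw hco) p i
    (by rw [hpi, prodAV_comp_nabla hA.2.2 hsig])

/-- the restricted product on the image `A × V` of `∇_{A⊗V}` is
associative. -/
theorem restricted_product_assoc (A V : C) (eta : 𝟙_ C ⟶ A) (mu : A ⊗ A ⟶ A)
    (hA : IsMon A eta mu) (psi : V ⊗ A ⟶ A ⊗ V) (hpsi : Measuring A V mu psi)
    (sig : V ⊗ V ⟶ A ⊗ V) (htw : Twisted A V mu psi sig)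
    (hco : Cocycle A V mu psi sig) (hsig : sig ≫ nabla A V eta mu psi = sig)
    (P : C) (p : A ⊗ V ⟶ P) (i : P ⟶ A ⊗ V)
    (hpi : p ≫ i = nabla A V eta mu psi) (hip : i ≫ p = 𝟙 P) :
    (((i ⊗ₘ i) ≫ prodAV A V mu psi sig ≫ p) ▷ P) ≫
        ((i ⊗ₘ i) ≫ prodAV A V mu psi sig ≫ p) =
      (α_ P P P).hom ≫ (P ◁ ((i ⊗ₘ i) ≫ prodAV A V mu psi sig ≫ p)) ≫
        ((i ⊗ₘ i) ≫ prodAV A V mu psi sig ≫ p) :=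
  restricted_product_assoc_general A V eta mu hA psi hpsi sig htw hco hsig P p i hpi

end WeakCrossed
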